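/- arXiv:2303.05119 — 5 statements merged into one kernel-verified Lean document; each statement's English description precedes it below -/
import Mathlib

section
/- Let π ∈ Π(1/n·𝟏, 1/n·𝟏) and U ∈ St(d,k). Then the weighted reconstruction cost satisfies the exact identity Σ_{i,j=1}^{n} ‖x_i − UUᵀx_j‖² π_{ij} = (1/n) Σ_{i=1}^{n} ‖x_i‖² − tr(Uᵀ M U), where M = X (2·sym(π) − (1/n) I_n) Xᵀ. Consequently, minimizing Σ_{i,j} ‖x_i − UUᵀx_j‖² π_{ij} over U ∈ St(d,k) is equivalent to maximizing tr(Uᵀ M U) over U ∈ St(d,k). -/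
open Matrix BigOperators Finset

/-!
Write `P = U Uᵀ` and `G = Xᵀ P X`. Since `UᵀU = 1`, `P` is a symmetric idempotent, so the Gram
matrix of the projected data `P X` is again `G`. Expanding the squares and using that both
marginals of `π` equal `1/n`, the cost becomes `(1/n) Σ ‖xᵢ‖² − 2 tr(G πᵀ) + (1/n) tr G`.
On the other side, `tr(Uᵀ M U) = tr(G (π + πᵀ − (1/n) I))`, and for symmetric `G` this equals
`2 tr(G πᵀ) − (1/n) tr G`. The term `(1/n) Σ ‖xᵢ‖²` does not depend on `U`, which gives the
equivalence of the two optimisation problems.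
-/

section

variable {d n k : Type*} [Fintype d] [Fintype n] [Fintype k]

theorem weighted_sum_sq_dist_eq {c : ℝ} (X Y : Matrix d n ℝ) (π : Matrix n n ℝ)
    (hrow : ∀ i, ∑ j, π i j = c) (hcol : ∀ j, ∑ i, π i j = c) :
    ∑ i, ∑ j, (∑ r, (X r i - Y r j) ^ 2) * π i j
      = c * ∑ i, ∑ r, X r i ^ 2 - 2 * trace (Xᵀ * Y * πᵀ) + c * trace (Yᵀ * Y) := by
  have hcross : trace (Xᵀ * Y * πᵀ) = ∑ i, ∑ j, (∑ r, X r i * Y r j) * π i j := by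
    rw [← sum_hadamard_eq]
    simp only [hadamard_apply, mul_apply, transpose_apply]
  have hrows : ∑ i, ∑ j, (∑ r, X r i ^ 2) * π i j = c * ∑ i, ∑ r, X r i ^ 2 := by
    rw [Finset.mul_sum]
    exact Finset.sum_congr rfl fun i _ => by rw [← Finset.mul_sum, hrow, mul_comm]
  have hcols : ∑ i, ∑ j, (∑ r, Y r j ^ 2) * π i j = c * trace (Yᵀ * Y) := by
    rw [Finset.sum_comm, trace, Finset.mul_sum]
    refine Finset.sum_congr rfl fun j _ => ?_
    rw [← Finset.mul_sum, hcol, mul_comm, diag_apply, mul_apply]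
    simp only [transpose_apply, sq]
  rw [hcross, ← hrows, ← hcols, Finset.mul_sum, ← Finset.sum_sub_distrib, ← Finset.sum_add_distrib]
  refine Finset.sum_congr rfl fun i _ => ?_
  rw [Finset.mul_sum, ← Finset.sum_sub_distrib, ← Finset.sum_add_distrib]
  refine Finset.sum_congr rfl fun j _ => ?_
  have hsq : ∑ r, (X r i - Y r j) ^ 2
      = ∑ r, X r i ^ 2 - 2 * ∑ r, X r i * Y r j + ∑ r, Y r j ^ 2 := by
    simp only [sub_sq, Finset.sum_add_distrib, Finset.sum_sub_distrib, Finset.mul_sum, mul_assoc]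
  rw [hsq]
  ring

theorem trace_mul_add_transpose_sub_smul_one [DecidableEq n] {G : Matrix n n ℝ} (hG : Gᵀ = G)
    (π : Matrix n n ℝ) (c : ℝ) :
    trace (G * (π + πᵀ - c • 1)) = 2 * trace (G * πᵀ) - c * trace G := by
  have hswap : trace (G * π) = trace (G * πᵀ) := by
    rw [← trace_transpose, transpose_mul, hG, trace_mul_comm]
  rw [Matrix.mul_sub, Matrix.mul_add, trace_sub, trace_add, hswap, Matrix.mul_smul,
    Matrix.mul_one, trace_smul, smul_eq_mul]
  ring

theorem transpose_mul_self_of_transpose_mul_eq_one [DecidableEq k] {U : Matrix d k ℝ}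
    (hU : Uᵀ * U = 1) : (U * Uᵀ)ᵀ * (U * Uᵀ) = U * Uᵀ := by
  rw [transpose_mul, transpose_transpose, Matrix.mul_assoc, ← Matrix.mul_assoc Uᵀ, hU,
    Matrix.one_mul]

theorem weighted_reconstruction_cost_eq [DecidableEq n] [DecidableEq k] {c : ℝ}
    (X : Matrix d n ℝ) (π : Matrix n n ℝ)
    (hrow : ∀ i, ∑ j, π i j = c) (hcol : ∀ j, ∑ i, π i j = c)
    {U : Matrix d k ℝ} (hU : Uᵀ * U = 1) :
    ∑ i, ∑ j, (∑ r, (X r i - (U * Uᵀ * X) r j) ^ 2) * π i j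
      = c * ∑ i, ∑ r, X r i ^ 2 - trace (Uᵀ * (X * (π + πᵀ - c • 1) * Xᵀ) * U) := by
  set G := Xᵀ * (U * Uᵀ * X)
  have hgram : (U * Uᵀ * X)ᵀ * (U * Uᵀ * X) = G := by
    rw [transpose_mul, Matrix.mul_assoc, ← Matrix.mul_assoc (U * Uᵀ)ᵀ,
      transpose_mul_self_of_transpose_mul_eq_one hU]
  have hG : Gᵀ = G := by
    rw [← hgram, transpose_mul, transpose_transpose]
  have htrace : trace (Uᵀ * (X * (π + πᵀ - c • 1) * Xᵀ) * U) = trace (G * (π + πᵀ - c • 1)) := by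
    rw [trace_mul_cycle, show U * Uᵀ * (X * (π + πᵀ - c • 1) * Xᵀ)
        = U * Uᵀ * X * (π + πᵀ - c • 1) * Xᵀ by simp only [Matrix.mul_assoc], trace_mul_comm]
    simp only [G, Matrix.mul_assoc]
  rw [weighted_sum_sq_dist_eq X _ π hrow hcol, hgram, htrace,
    trace_mul_add_transpose_sub_smul_one hG]
  ring
end

theorem stmt0_general (d n k : ℕ)
    (X : Matrix (Fin d) (Fin n) ℝ) (Pl : Matrix (Fin n) (Fin n) ℝ)
    (hPl_row : ∀ i, ∑ j, Pl i j = 1 / (n : ℝ))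
    (hPl_col : ∀ j, ∑ i, Pl i j = 1 / (n : ℝ))
    (U : Matrix (Fin d) (Fin k) ℝ) (hU : Uᵀ * U = 1)
    (M : Matrix (Fin d) (Fin d) ℝ)
    (hM : M = X * ((2 : ℝ) • ((1 / 2 : ℝ) • (Pl + Plᵀ)) - (1 / (n : ℝ)) • 1) * Xᵀ) :
    (∑ i, ∑ j, (∑ r, (X r i - (U * Uᵀ * X) r j) ^ 2) * Pl i j
        = (1 / (n : ℝ)) * ∑ i, ∑ r, (X r i) ^ 2 - Matrix.trace (Uᵀ * M * U))
    ∧ ∀ V W : Matrix (Fin d) (Fin k) ℝ, Vᵀ * V = 1 → Wᵀ * W = 1 →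
        ((∑ i, ∑ j, (∑ r, (X r i - (V * Vᵀ * X) r j) ^ 2) * Pl i j
            ≤ ∑ i, ∑ j, (∑ r, (X r i - (W * Wᵀ * X) r j) ^ 2) * Pl i j)
          ↔ Matrix.trace (Wᵀ * M * W) ≤ Matrix.trace (Vᵀ * M * V)) := by
  have hsym : (2 : ℝ) • ((1 / 2 : ℝ) • (Pl + Plᵀ)) = Pl + Plᵀ := by
    rw [smul_smul]; norm_num
  rw [hsym] at hM
  subst hM
  have hcost := fun {V : Matrix (Fin d) (Fin k) ℝ} (hV : Vᵀ * V = 1) =>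
    weighted_reconstruction_cost_eq X Pl hPl_row hPl_col hV
  refine ⟨hcost hU, fun V W hV hW => ?_⟩
  rw [hcost hV, hcost hW, sub_le_sub_iff_left]

/-- For a coupling `Pl ∈ Π(1/n·𝟏, 1/n·𝟏)` and `U ∈ St(d,k)`,
`Σ_{i,j} ‖x_i − UUᵀx_j‖² π_{ij} = (1/n) Σ_i ‖x_i‖² − tr(Uᵀ M U)` where
`M = X (2·sym(π) − (1/n) I) Xᵀ`; consequently minimizing the weighted
reconstruction cost over the Stiefel manifold is equivalent to maximizing
`tr(Uᵀ M U)`. -/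
theorem stmt0 (d n k : ℕ)
    (X : Matrix (Fin d) (Fin n) ℝ) (Pl : Matrix (Fin n) (Fin n) ℝ)
    (hPl_nonneg : ∀ i j, 0 ≤ Pl i j)
    (hPl_row : ∀ i, ∑ j, Pl i j = 1 / (n : ℝ))
    (hPl_col : ∀ j, ∑ i, Pl i j = 1 / (n : ℝ))
    (U : Matrix (Fin d) (Fin k) ℝ) (hU : Uᵀ * U = 1)
    (M : Matrix (Fin d) (Fin d) ℝ)
    (hM : M = X * ((2 : ℝ) • ((1 / 2 : ℝ) • (Pl + Plᵀ)) - (1 / (n : ℝ)) • 1) * Xᵀ) :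
    (∑ i, ∑ j, (∑ r, (X r i - (U * Uᵀ * X) r j) ^ 2) * Pl i j
        = (1 / (n : ℝ)) * ∑ i, ∑ r, (X r i) ^ 2 - Matrix.trace (Uᵀ * M * U))
    ∧ ∀ V W : Matrix (Fin d) (Fin k) ℝ, Vᵀ * V = 1 → Wᵀ * W = 1 →
        ((∑ i, ∑ j, (∑ r, (X r i - (V * Vᵀ * X) r j) ^ 2) * Pl i j
            ≤ ∑ i, ∑ j, (∑ r, (X r i - (W * Wᵀ * X) r j) ^ 2) * Pl i j)
          ↔ Matrix.trace (Wᵀ * M * W) ≤ Matrix.trace (Vᵀ * M * V)) :=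
  stmt0_general d n k X Pl hPl_row hPl_col U hU M hM
end

section
/- Let π ∈ Π(1/n·𝟏, 1/n·𝟏), let Σ = (1/n) X Xᵀ, let λ_max^Σ be the largest eigenvalue of Σ, let λ_min^{sym(π)} be the smallest eigenvalue of sym(π), let α = 1 − 2n·λ_min^{sym(π)}, and define P = α (Σ − 1_{α>0} λ_max^Σ I_d) − 2 X (sym(π) − λ_min^{sym(π)} I_n) Xᵀ. Then for every U ∈ St(d,k), Σ_{i,j=1}^{n} ‖x_i − UUᵀx_j‖² π_{ij} = tr(Uᵀ P U) + (1/n) Σ_{i=1}^{n} ‖x_i‖² + 1_{α>0}·α·k·λ_max^Σ; in particular, minimizing the weighted reconstruction cost over St(d,k) is equivalent to minimizing tr(Uᵀ P U) over St(d,k). -/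
open Matrix BigOperators Finset

/-!
Writing `Q = UUᵀ`, the identity `QᵀQ = Q` expands each squared residual `‖x_i − Q x_j‖²` into
`‖x_i‖² − 2 (XᵀQX)_{ij} + (XᵀQX)_{jj}`. Since every row and column of `π` sums to `1/n`, the
weighted cost becomes `(1/n) ∑ᵢ ‖x_i‖² + tr(Uᵀ (Σ − 2 X sym(π) Xᵀ) U)`, by cyclicity of the trace and
because `XᵀQX` is symmetric. Finally `P` differs from `Σ − 2 X sym(π) Xᵀ` only by the multiple
`α 1_{α>0} λ_max` of the identity, whose trace against `U` is `α 1_{α>0} λ_max k`.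
-/

namespace Matrix

variable {m ι κ : Type*} [Fintype m]

lemma sum_sq_sub_mul_apply (X : Matrix m ι ℝ) (Q : Matrix m m ℝ) (hQ : Qᵀ * Q = Q) (i j : ι) :
    ∑ r, (X r i - (Q * X) r j) ^ 2
      = ∑ r, X r i ^ 2 - 2 * (Xᵀ * Q * X) i j + (Xᵀ * Q * X) j j := by
  have hcross : ∑ r, X r i * (Q * X) r j = (Xᵀ * Q * X) i j := by
    rw [Matrix.mul_assoc, mul_apply]; rfl
  have hsq : ∑ r, (Q * X) r j ^ 2 = (Xᵀ * Q * X) j j := by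
    rw [show Xᵀ * Q * X = (Q * X)ᵀ * (Q * X) by
      rw [transpose_mul, Matrix.mul_assoc Xᵀ Qᵀ, ← Matrix.mul_assoc Qᵀ, hQ, Matrix.mul_assoc],
      mul_apply]
    simp only [transpose_apply, sq]
  simp only [sub_sq, sum_add_distrib, sum_sub_distrib, mul_assoc, ← mul_sum, hcross, hsq]

variable [Fintype ι]

lemma sum_sum_mul_of_sum_row_of_sum_col (π : Matrix ι ι ℝ) {a b : ℝ}
    (hrow : ∀ i, ∑ j, π i j = a) (hcol : ∀ j, ∑ i, π i j = b) (f g : ι → ℝ) (G : Matrix ι ι ℝ) :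
    ∑ i, ∑ j, (f i - 2 * G i j + g j) * π i j
      = a * ∑ i, f i + b * ∑ j, g j - 2 * ∑ i, ∑ j, G i j * π i j := by
  have hf : ∑ i, ∑ j, f i * π i j = a * ∑ i, f i := by
    simp_rw [← mul_sum, hrow, ← sum_mul, mul_comm]
  have hg : ∑ i, ∑ j, g j * π i j = b * ∑ j, g j := by
    rw [sum_comm]; simp_rw [← mul_sum, hcol, ← sum_mul, mul_comm]
  calc ∑ i, ∑ j, (f i - 2 * G i j + g j) * π i j
      = ∑ i, ∑ j, f i * π i j - 2 * ∑ i, ∑ j, G i j * π i j + ∑ i, ∑ j, g j * π i j := by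
        simp only [add_mul, sub_mul, sum_add_distrib, sum_sub_distrib, mul_assoc, mul_sum]
    _ = _ := by rw [hf, hg]; ring

lemma trace_symm_part_mul (π G : Matrix ι ι ℝ) (hG : Gᵀ = G) :
    trace (((1 / 2 : ℝ) • (π + πᵀ)) * G) = ∑ i, ∑ j, G i j * π i j := by
  have hπ : trace (π * G) = trace (πᵀ * G) := by
    rw [← trace_transpose, transpose_mul, hG, trace_mul_comm]
  have hπt : trace (πᵀ * G) = ∑ i, ∑ j, G i j * π i j := by
    rw [trace, sum_comm]; simp only [diag, mul_apply, transpose_apply, mul_comm]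
  rw [smul_mul, add_mul, trace_smul, trace_add, hπ, hπt, smul_eq_mul]
  ring

variable [Fintype κ] [DecidableEq κ]

lemma sum_sum_sq_sub_mul_transpose_mul (X : Matrix m ι ℝ) (π : Matrix ι ι ℝ) {c : ℝ}
    (hrow : ∀ i, ∑ j, π i j = c) (hcol : ∀ j, ∑ i, π i j = c)
    (U : Matrix m κ ℝ) (hU : Uᵀ * U = 1) :
    ∑ i, ∑ j, (∑ r, (X r i - (U * Uᵀ * X) r j) ^ 2) * π i j
      = c * ∑ i, ∑ r, X r i ^ 2
        + trace (Uᵀ * (c • (X * Xᵀ) - (2 : ℝ) • (X * ((1 / 2 : ℝ) • (π + πᵀ)) * Xᵀ)) * U) := by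
  set M := Xᵀ * (U * Uᵀ) * X
  have hproj : (U * Uᵀ)ᵀ * (U * Uᵀ) = U * Uᵀ := by
    rw [transpose_mul, transpose_transpose, Matrix.mul_assoc, ← Matrix.mul_assoc Uᵀ, hU,
      Matrix.one_mul]
  have hM : Mᵀ = M := by simp only [M, transpose_mul, transpose_transpose, Matrix.mul_assoc]
  have hcyc : ∀ Y : Matrix ι m ℝ, trace (Uᵀ * (X * Y) * U) = trace (Y * (U * Uᵀ) * X) := by
    intro Y
    rw [trace_mul_cycle, trace_mul_comm, Matrix.mul_assoc, trace_mul_comm]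
  have hgram : trace (Uᵀ * (X * Xᵀ) * U) = ∑ j, M j j := hcyc Xᵀ
  have hsym : trace (Uᵀ * (X * ((1 / 2 : ℝ) • (π + πᵀ)) * Xᵀ) * U)
      = ∑ i, ∑ j, M i j * π i j := by
    rw [Matrix.mul_assoc X, hcyc, ← trace_symm_part_mul π M hM]
    simp only [M, Matrix.mul_assoc]
  rw [Matrix.mul_sub, Matrix.sub_mul, trace_sub, Matrix.mul_smul, Matrix.smul_mul, trace_smul,
    Matrix.mul_smul, Matrix.smul_mul, trace_smul, hgram, hsym, smul_eq_mul, smul_eq_mul]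
  simp_rw [sum_sq_sub_mul_apply X _ hproj]
  rw [sum_sum_mul_of_sum_row_of_sum_col π hrow hcol]
  ring

lemma trace_transpose_mul_sub_smul_one_mul [DecidableEq m] (A : Matrix m m ℝ) (c : ℝ)
    (U : Matrix m κ ℝ) (hU : Uᵀ * U = 1) :
    trace (Uᵀ * (A - c • 1) * U) = trace (Uᵀ * A * U) - c * Fintype.card κ := by
  rw [Matrix.mul_sub, Matrix.sub_mul, trace_sub, Matrix.mul_smul, Matrix.smul_mul, Matrix.mul_one,
    hU, trace_smul, trace_one, smul_eq_mul]

end Matrix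

theorem stmt4_general (d n k : ℕ)
    (X : Matrix (Fin d) (Fin n) ℝ) (Pl : Matrix (Fin n) (Fin n) ℝ)
    (hPl_row : ∀ i, ∑ j, Pl i j = 1 / (n : ℝ))
    (hPl_col : ∀ j, ∑ i, Pl i j = 1 / (n : ℝ))
    (Sig : Matrix (Fin d) (Fin d) ℝ) (hSig : Sig = (1 / (n : ℝ)) • (X * Xᵀ))
    (symPl : Matrix (Fin n) (Fin n) ℝ) (hsymPl : symPl = (1 / 2 : ℝ) • (Pl + Plᵀ))
    (lmax : ℝ)
    (lmin : ℝ)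
    (α : ℝ) (hα : α = 1 - 2 * (n : ℝ) * lmin)
    (P : Matrix (Fin d) (Fin d) ℝ)
    (hP : P = α • (Sig - (if 0 < α then lmax else 0) • (1 : Matrix (Fin d) (Fin d) ℝ))
            - (2 : ℝ) • (X * (symPl - lmin • (1 : Matrix (Fin n) (Fin n) ℝ)) * Xᵀ)) :
    (∀ U : Matrix (Fin d) (Fin k) ℝ, Uᵀ * U = 1 →
        ∑ i, ∑ j, (∑ r, (X r i - (U * Uᵀ * X) r j) ^ 2) * Pl i j
          = Matrix.trace (Uᵀ * P * U) + (1 / (n : ℝ)) * ∑ i, ∑ r, (X r i) ^ 2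
            + (if 0 < α then (1 : ℝ) else 0) * α * (k : ℝ) * lmax)
    ∧ ∀ U V : Matrix (Fin d) (Fin k) ℝ, Uᵀ * U = 1 → Vᵀ * V = 1 →
        ((∑ i, ∑ j, (∑ r, (X r i - (U * Uᵀ * X) r j) ^ 2) * Pl i j
            ≤ ∑ i, ∑ j, (∑ r, (X r i - (V * Vᵀ * X) r j) ^ 2) * Pl i j)
          ↔ Matrix.trace (Uᵀ * P * U) ≤ Matrix.trace (Vᵀ * P * V)) := by
  -- `α = 1 - 2nλ_min` is chosen so that the `λ_min` shift of `sym(π)` cancels the rescaling of `Σ`.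
  have hcancel : (α - 1) • Sig + (2 * lmin) • (X * Xᵀ) = 0 := by
    rcases n.eq_zero_or_pos with rfl | hn
    · simp [hSig, empty_mul_empty]
    · have hcoef : (1 - 2 * (n : ℝ) * lmin - 1) * (1 / n) + 2 * lmin = 0 := by
        field_simp; ring
      rw [hSig, hα, smul_smul, ← add_smul, hcoef, zero_smul]
  have hP' : P = (Sig - (2 : ℝ) • (X * symPl * Xᵀ)) - (α * if 0 < α then lmax else 0) • 1 := by
    rw [hP, Matrix.mul_sub, Matrix.sub_mul, Matrix.mul_smul, Matrix.mul_one, Matrix.smul_mul]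
    linear_combination (norm := module) hcancel
  have hcost : ∀ U : Matrix (Fin d) (Fin k) ℝ, Uᵀ * U = 1 →
      ∑ i, ∑ j, (∑ r, (X r i - (U * Uᵀ * X) r j) ^ 2) * Pl i j
        = Matrix.trace (Uᵀ * P * U) + (1 / (n : ℝ)) * ∑ i, ∑ r, (X r i) ^ 2
          + (if 0 < α then (1 : ℝ) else 0) * α * (k : ℝ) * lmax := by
    intro U hU
    rw [sum_sum_sq_sub_mul_transpose_mul X Pl hPl_row hPl_col U hU, ← hSig, ← hsymPl, hP',
      trace_transpose_mul_sub_smul_one_mul _ _ U hU, Fintype.card_fin]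
    split_ifs <;> ring
  refine ⟨hcost, fun U V hU hV => ?_⟩
  rw [hcost U hU, hcost V hV]
  simp only [add_le_add_iff_right]

/-- with `Σ = (1/n) X Xᵀ`, `λmax` the largest eigenvalue of `Σ`,
`λmin` the smallest eigenvalue of `sym(π)`, `α = 1 − 2n·λmin` and
`P = α (Σ − 1_{α>0} λmax I) − 2 X (sym(π) − λmin I) Xᵀ`, for every `U ∈ St(d,k)`
the weighted reconstruction cost equals
`tr(Uᵀ P U) + (1/n) Σ_i ‖x_i‖² + 1_{α>0}·α·k·λmax`; in particular minimizing
the cost over `St(d,k)` is equivalent to minimizing `tr(Uᵀ P U)` there. -/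
theorem stmt4 (d n k : ℕ)
    (X : Matrix (Fin d) (Fin n) ℝ) (Pl : Matrix (Fin n) (Fin n) ℝ)
    (hPl_nonneg : ∀ i j, 0 ≤ Pl i j)
    (hPl_row : ∀ i, ∑ j, Pl i j = 1 / (n : ℝ))
    (hPl_col : ∀ j, ∑ i, Pl i j = 1 / (n : ℝ))
    (Sig : Matrix (Fin d) (Fin d) ℝ) (hSig : Sig = (1 / (n : ℝ)) • (X * Xᵀ))
    (symPl : Matrix (Fin n) (Fin n) ℝ) (hsymPl : symPl = (1 / 2 : ℝ) • (Pl + Plᵀ))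
    (lmax : ℝ)
    (hlmax_ev : ∃ v : Fin d → ℝ, v ≠ 0 ∧ Sig *ᵥ v = lmax • v)
    (hlmax_max : ∀ (μ : ℝ) (v : Fin d → ℝ), v ≠ 0 → Sig *ᵥ v = μ • v → μ ≤ lmax)
    (lmin : ℝ)
    (hlmin_ev : ∃ v : Fin n → ℝ, v ≠ 0 ∧ symPl *ᵥ v = lmin • v)
    (hlmin_min : ∀ (μ : ℝ) (v : Fin n → ℝ), v ≠ 0 → symPl *ᵥ v = μ • v → lmin ≤ μ)
    (α : ℝ) (hα : α = 1 - 2 * (n : ℝ) * lmin)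
    (P : Matrix (Fin d) (Fin d) ℝ)
    (hP : P = α • (Sig - (if 0 < α then lmax else 0) • (1 : Matrix (Fin d) (Fin d) ℝ))
            - (2 : ℝ) • (X * (symPl - lmin • (1 : Matrix (Fin n) (Fin n) ℝ)) * Xᵀ)) :
    (∀ U : Matrix (Fin d) (Fin k) ℝ, Uᵀ * U = 1 →
        ∑ i, ∑ j, (∑ r, (X r i - (U * Uᵀ * X) r j) ^ 2) * Pl i j
          = Matrix.trace (Uᵀ * P * U) + (1 / (n : ℝ)) * ∑ i, ∑ r, (X r i) ^ 2
            + (if 0 < α then (1 : ℝ) else 0) * α * (k : ℝ) * lmax)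
    ∧ ∀ U V : Matrix (Fin d) (Fin k) ℝ, Uᵀ * U = 1 → Vᵀ * V = 1 →
        ((∑ i, ∑ j, (∑ r, (X r i - (U * Uᵀ * X) r j) ^ 2) * Pl i j
            ≤ ∑ i, ∑ j, (∑ r, (X r i - (V * Vᵀ * X) r j) ^ 2) * Pl i j)
          ↔ Matrix.trace (Uᵀ * P * U) ≤ Matrix.trace (Vᵀ * P * V)) :=
  stmt4_general d n k X Pl hPl_row hPl_col Sig hSig symPl hsymPl lmax lmin α hα P hP
end

section
/- Let π ∈ Π(1/n·𝟏, 1/n·𝟏), Σ = (1/n) X Xᵀ, λ_max^Σ the largest eigenvalue of Σ, λ_min^{sym(π)} the smallest eigenvalue of sym(π), α = 1 − 2n·λ_min^{sym(π)}, and P = α (Σ − 1_{α>0} λ_max^Σ I_d) − 2 X (sym(π) − λ_min^{sym(π)} I_n) Xᵀ. Then P is negative semidefinite: for all v ∈ ℝ^d, vᵀ P v ≤ 0. -/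
/-!
`Σ = (1/n) X Xᵀ` satisfies `0 ⪯ Σ ⪯ λmax I`, so `α (Σ − 1_{α>0} λmax I) ⪯ 0` whatever the sign
of `α`; and `sym(π) ⪰ λmin I` makes `X (sym(π) − λmin I) Xᵀ ⪰ 0`.
-/

open Matrix

namespace Matrix

variable {m : Type*} [Fintype m] [DecidableEq m]

-- An eigenvector of `c • 1 - A` for `μ` is one of `A` for `c - μ`, so `c - μ ≤ c`.
lemma IsHermitian.posSemidef_smul_one_sub {A : Matrix m m ℝ} (hA : A.IsHermitian) {c : ℝ}
    (h : ∀ (μ : ℝ) (w : m → ℝ), w ≠ 0 → A *ᵥ w = μ • w → μ ≤ c) :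
    (c • (1 : Matrix m m ℝ) - A).PosSemidef := by
  have hB : (c • (1 : Matrix m m ℝ) - A).IsHermitian :=
    (isHermitian_one.smul (IsSelfAdjoint.all c)).sub hA
  refine hB.posSemidef_iff_eigenvalues_nonneg.mpr fun i => ?_
  set w : m → ℝ := ⇑(hB.eigenvectorBasis i)
  have hw : w ≠ 0 :=
    (WithLp.ofLp_eq_zero (p := 2)).not.mpr (hB.eigenvectorBasis.orthonormal.ne_zero i)
  have hBw : c • w - A *ᵥ w = hB.eigenvalues i • w := by
    rw [← hB.mulVec_eigenvectorBasis i, sub_mulVec, smul_mulVec, one_mulVec]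
  have hAw : A *ᵥ w = (c - hB.eigenvalues i) • w := by
    rw [sub_smul, ← hBw, sub_sub_cancel]
  change 0 ≤ hB.eigenvalues i
  linarith [h _ w hw hAw]

lemma IsHermitian.posSemidef_sub_smul_one {A : Matrix m m ℝ} (hA : A.IsHermitian) {c : ℝ}
    (h : ∀ (μ : ℝ) (w : m → ℝ), w ≠ 0 → A *ᵥ w = μ • w → c ≤ μ) :
    (A - c • (1 : Matrix m m ℝ)).PosSemidef := by
  have hneg : ∀ (μ : ℝ) (w : m → ℝ), w ≠ 0 → (-A) *ᵥ w = μ • w → μ ≤ -c := fun μ w hw hAw => by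
    have := h (-μ) w hw (by rw [neg_smul, ← hAw, neg_mulVec, neg_neg])
    linarith
  simpa [neg_smul, sub_eq_add_neg, add_comm] using hA.neg.posSemidef_smul_one_sub hneg

lemma PosSemidef.mul_dotProduct_sub_ite_smul_one_mulVec_nonpos {S : Matrix m m ℝ}
    (hS : S.PosSemidef) {c : ℝ} (hc : (c • (1 : Matrix m m ℝ) - S).PosSemidef) (α : ℝ)
    (v : m → ℝ) : α * (v ⬝ᵥ ((S - (if 0 < α then c else 0) • (1 : Matrix m m ℝ)) *ᵥ v)) ≤ 0 := by
  split_ifs with hα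
  · have hcv : 0 ≤ v ⬝ᵥ ((c • (1 : Matrix m m ℝ) - S) *ᵥ v) := by
      simpa using hc.dotProduct_mulVec_nonneg v
    rw [← neg_sub, neg_mulVec, dotProduct_neg]
    nlinarith
  · have hSv : 0 ≤ v ⬝ᵥ (S *ᵥ v) := by simpa using hS.dotProduct_mulVec_nonneg v
    rw [zero_smul, sub_zero]
    exact mul_nonpos_of_nonpos_of_nonneg (not_lt.mp hα) hSv

end Matrix

theorem stmt5_general (d n : ℕ)
    (X : Matrix (Fin d) (Fin n) ℝ) (Pl : Matrix (Fin n) (Fin n) ℝ)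
    (Sig : Matrix (Fin d) (Fin d) ℝ) (hSig : Sig = (1 / (n : ℝ)) • (X * Xᵀ))
    (symPl : Matrix (Fin n) (Fin n) ℝ) (hsymPl : symPl = (1 / 2 : ℝ) • (Pl + Plᵀ))
    (lmax : ℝ)
    (hlmax_max : ∀ (μ : ℝ) (v : Fin d → ℝ), v ≠ 0 → Sig *ᵥ v = μ • v → μ ≤ lmax)
    (lmin : ℝ)
    (hlmin_min : ∀ (μ : ℝ) (v : Fin n → ℝ), v ≠ 0 → symPl *ᵥ v = μ • v → lmin ≤ μ)
    (α : ℝ)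
    (P : Matrix (Fin d) (Fin d) ℝ)
    (hP : P = α • (Sig - (if 0 < α then lmax else 0) • (1 : Matrix (Fin d) (Fin d) ℝ))
            - (2 : ℝ) • (X * (symPl - lmin • (1 : Matrix (Fin n) (Fin n) ℝ)) * Xᵀ)) :
    ∀ v : Fin d → ℝ, v ⬝ᵥ (P *ᵥ v) ≤ 0 := by
  intro v
  have hSig_psd : Sig.PosSemidef := by
    simpa [hSig] using (posSemidef_self_mul_conjTranspose X).smul (a := 1 / (n : ℝ)) (by positivity)
  have hsymPl_herm : symPl.IsHermitian := by
    simpa [hsymPl] using (isHermitian_add_transpose_self Pl).smul (IsSelfAdjoint.all (1 / 2 : ℝ))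
  have hquad : 0 ≤ v ⬝ᵥ ((X * (symPl - lmin • (1 : Matrix (Fin n) (Fin n) ℝ)) * Xᵀ) *ᵥ v) := by
    simpa using ((hsymPl_herm.posSemidef_sub_smul_one hlmin_min).mul_mul_conjTranspose_same X
      ).dotProduct_mulVec_nonneg v
  have hSig_term := hSig_psd.mul_dotProduct_sub_ite_smul_one_mulVec_nonpos
    (hSig_psd.isHermitian.posSemidef_smul_one_sub hlmax_max) α v
  rw [hP, sub_mulVec, dotProduct_sub, smul_mulVec, smul_mulVec, dotProduct_smul, dotProduct_smul,
    smul_eq_mul, smul_eq_mul]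
  linarith

/-- with `Σ = (1/n) X Xᵀ`, `λmax` the largest eigenvalue of `Σ`,
`λmin` the smallest eigenvalue of `sym(π)`, `α = 1 − 2n·λmin` and
`P = α (Σ − 1_{α>0} λmax I) − 2 X (sym(π) − λmin I) Xᵀ`, the matrix `P` is
negative semidefinite: `vᵀ P v ≤ 0` for all `v ∈ ℝ^d`. -/
theorem stmt5 (d n : ℕ)
    (X : Matrix (Fin d) (Fin n) ℝ) (Pl : Matrix (Fin n) (Fin n) ℝ)
    (hPl_nonneg : ∀ i j, 0 ≤ Pl i j)
    (hPl_row : ∀ i, ∑ j, Pl i j = 1 / (n : ℝ))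
    (hPl_col : ∀ j, ∑ i, Pl i j = 1 / (n : ℝ))
    (Sig : Matrix (Fin d) (Fin d) ℝ) (hSig : Sig = (1 / (n : ℝ)) • (X * Xᵀ))
    (symPl : Matrix (Fin n) (Fin n) ℝ) (hsymPl : symPl = (1 / 2 : ℝ) • (Pl + Plᵀ))
    (lmax : ℝ)
    (hlmax_ev : ∃ v : Fin d → ℝ, v ≠ 0 ∧ Sig *ᵥ v = lmax • v)
    (hlmax_max : ∀ (μ : ℝ) (v : Fin d → ℝ), v ≠ 0 → Sig *ᵥ v = μ • v → μ ≤ lmax)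
    (lmin : ℝ)
    (hlmin_ev : ∃ v : Fin n → ℝ, v ≠ 0 ∧ symPl *ᵥ v = lmin • v)
    (hlmin_min : ∀ (μ : ℝ) (v : Fin n → ℝ), v ≠ 0 → symPl *ᵥ v = μ • v → lmin ≤ μ)
    (α : ℝ) (hα : α = 1 - 2 * (n : ℝ) * lmin)
    (P : Matrix (Fin d) (Fin d) ℝ)
    (hP : P = α • (Sig - (if 0 < α then lmax else 0) • (1 : Matrix (Fin d) (Fin d) ℝ))
            - (2 : ℝ) • (X * (symPl - lmin • (1 : Matrix (Fin n) (Fin n) ℝ)) * Xᵀ)) :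
    ∀ v : Fin d → ℝ, v ⬝ᵥ (P *ᵥ v) ≤ 0 :=
  stmt5_general d n X Pl Sig hSig symPl hsymPl lmax hlmax_max lmin hlmin_min α P hP
end

section
/- Let U ∈ St(d,k). Then for every coupling π ∈ Π(1/n·𝟏, 1/n·𝟏), Σ_{i,j=1}^{n} ‖x_i − UUᵀx_j‖² π_{ij} ≥ (1/n) Σ_{i=1}^{n} ‖x_i − UUᵀx_i‖²; i.e., the rescaled identity coupling π = (1/n) I_n minimizes the transport cost Σ_{i,j} ‖x_i − UUᵀx_j‖² π_{ij} over Π(1/n·𝟏, 1/n·𝟏). Consequently, the unregularized optimal transport formulation reduces to the standard PCA reconstruction objective. -/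
/-!
`P = UUᵀ` is the orthogonal projection onto the column space of `U`, so `P x_i` is the point of
that space closest to `x_i`: `‖x_i − P x_j‖² ≥ ‖x_i − P x_i‖²` for every `j`. Averaging this over
any nonnegative `π` whose row sums are `1/n` gives the lower bound, which the diagonal coupling
`(1/n) I` attains.
-/

open Matrix BigOperators Finset

section Projection

variable {m : Type*} [Fintype m]

theorem Matrix.mulVec_sub_mulVec_self_eq_zero_of_mul_self {P : Matrix m m ℝ} (hP : P * P = P)
    (x : m → ℝ) : P *ᵥ (x - P *ᵥ x) = 0 := by
  rw [mulVec_sub, mulVec_mulVec, hP, sub_self]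

/-- Pythagoras: `x - P y = (x - P x) + P (x - y)`, and the two summands are orthogonal. -/
theorem Matrix.dotProduct_sub_mulVec_self_le_of_isProjection {P : Matrix m m ℝ} (hPt : Pᵀ = P)
    (hP : P * P = P) (x y : m → ℝ) :
    (x - P *ᵥ x) ⬝ᵥ (x - P *ᵥ x) ≤ (x - P *ᵥ y) ⬝ᵥ (x - P *ᵥ y) := by
  set e := x - P *ᵥ x
  set w := P *ᵥ (x - y)
  have hsplit : x - P *ᵥ y = e + w := by
    simp only [e, w, mulVec_sub]
    abel
  have horth : e ⬝ᵥ w = 0 := by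
    rw [dotProduct_mulVec, ← mulVec_transpose, hPt,
      mulVec_sub_mulVec_self_eq_zero_of_mul_self hP, zero_dotProduct]
  have hw : 0 ≤ w ⬝ᵥ w := Finset.sum_nonneg fun r _ => mul_self_nonneg (w r)
  rw [hsplit, add_dotProduct, dotProduct_add, dotProduct_add, horth, dotProduct_comm w e, horth]
  linarith

theorem Matrix.sum_sq_sub_mulVec_self_le_of_isProjection {P : Matrix m m ℝ} (hPt : Pᵀ = P)
    (hP : P * P = P) (x y : m → ℝ) :
    ∑ r, (x r - (P *ᵥ x) r) ^ 2 ≤ ∑ r, (x r - (P *ᵥ y) r) ^ 2 := by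
  simpa only [dotProduct, Pi.sub_apply, sq] using
    dotProduct_sub_mulVec_self_le_of_isProjection hPt hP x y

end Projection

theorem Matrix.transpose_mul_transpose_self {d k : Type*} [Fintype k] (U : Matrix d k ℝ) :
    (U * Uᵀ)ᵀ = U * Uᵀ := by
  rw [transpose_mul, transpose_transpose]

theorem Matrix.mul_transpose_mul_self_of_orthonormal {d k : Type*} [Fintype d] [Fintype k]
    [DecidableEq k] {U : Matrix d k ℝ} (hU : Uᵀ * U = 1) : U * Uᵀ * (U * Uᵀ) = U * Uᵀ := by
  rw [Matrix.mul_assoc, ← Matrix.mul_assoc Uᵀ, hU, Matrix.one_mul]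

section Coupling

variable {ι : Type*} [Fintype ι]

theorem sum_diag_mul_le_sum_mul_of_diag_le {c π : ι → ι → ℝ} (hc : ∀ i j, c i i ≤ c i j)
    (hπ : ∀ i j, 0 ≤ π i j) : ∑ i, c i i * ∑ j, π i j ≤ ∑ i, ∑ j, c i j * π i j := by
  simp only [Finset.mul_sum]
  gcongr with i _ j _
  exacts [hπ i j, hc i j]

variable [DecidableEq ι]

theorem sum_mul_smul_one_apply (c : ι → ι → ℝ) (a : ℝ) :
    ∑ i, ∑ j, c i j * (a • (1 : Matrix ι ι ℝ)) i j = a * ∑ i, c i i := by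
  simp [Matrix.one_apply, Finset.mul_sum, mul_comm]

end Coupling

/-- for `U ∈ St(d,k)` and every coupling `π ∈ Π(1/n·𝟏, 1/n·𝟏)`,
`Σ_{i,j} ‖x_i − UUᵀx_j‖² π_{ij} ≥ (1/n) Σ_i ‖x_i − UUᵀx_i‖²`; the rescaled
identity coupling `(1/n) I` belongs to `Π(1/n·𝟏, 1/n·𝟏)` and attains this
lower bound, so it minimizes the transport cost. -/
theorem stmt12 (d n k : ℕ)
    (X : Matrix (Fin d) (Fin n) ℝ)
    (U : Matrix (Fin d) (Fin k) ℝ) (hU : Uᵀ * U = 1) :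
    (∀ Pl : Matrix (Fin n) (Fin n) ℝ,
        (∀ i j, 0 ≤ Pl i j) →
        (∀ i, ∑ j, Pl i j = 1 / (n : ℝ)) →
        (∀ j, ∑ i, Pl i j = 1 / (n : ℝ)) →
        ∑ i, ∑ j, (∑ r, (X r i - (U * Uᵀ * X) r j) ^ 2) * Pl i j
          ≥ (1 / (n : ℝ)) * ∑ i, ∑ r, (X r i - (U * Uᵀ * X) r i) ^ 2)
    ∧ (∀ i j, (0 : ℝ) ≤ ((1 / (n : ℝ)) • (1 : Matrix (Fin n) (Fin n) ℝ)) i j)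
    ∧ (∀ i, ∑ j, ((1 / (n : ℝ)) • (1 : Matrix (Fin n) (Fin n) ℝ)) i j = 1 / (n : ℝ))
    ∧ (∀ j, ∑ i, ((1 / (n : ℝ)) • (1 : Matrix (Fin n) (Fin n) ℝ)) i j = 1 / (n : ℝ))
    ∧ ∑ i, ∑ j, (∑ r, (X r i - (U * Uᵀ * X) r j) ^ 2)
          * ((1 / (n : ℝ)) • (1 : Matrix (Fin n) (Fin n) ℝ)) i j
        = (1 / (n : ℝ)) * ∑ i, ∑ r, (X r i - (U * Uᵀ * X) r i) ^ 2 := by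
  have hcost (i j : Fin n) :
      ∑ r, (X r i - (U * Uᵀ * X) r i) ^ 2 ≤ ∑ r, (X r i - (U * Uᵀ * X) r j) ^ 2 :=
    sum_sq_sub_mulVec_self_le_of_isProjection (transpose_mul_transpose_self U)
      (mul_transpose_mul_self_of_orthonormal hU) (Xᵀ i) (Xᵀ j)
  refine ⟨fun Pl hPl hrow _ => ?_, fun i j => ?_, fun i => ?_, fun j => ?_,
    sum_mul_smul_one_apply _ _⟩
  · have := sum_diag_mul_le_sum_mul_of_diag_le
      (c := fun i j => ∑ r, (X r i - (U * Uᵀ * X) r j) ^ 2) hcost hPl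
    simp only [hrow, ← Finset.sum_mul] at this
    linarith
  · simp only [Matrix.smul_apply, one_apply, smul_eq_mul]
    positivity
  · simp [one_apply]
  · simp [one_apply, eq_comm]
end

section
/- (Descent property of one majorization–minimization step) Let P ∈ ℝ^{d×d} be symmetric negative semidefinite, and let U₀, U₁ ∈ St(d,k) be such that tr(U₁ᵀ (−P) U₀) ≥ tr(Uᵀ (−P) U₀) for every U ∈ St(d,k) (i.e., U₁ maximizes the linearization over the Stiefel manifold). Then tr(U₁ᵀ P U₁) ≤ tr(U₀ᵀ P U₀); i.e., the MM update does not increase the objective U ↦ tr(Uᵀ P U). -/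
/-! With `Q = -P` positive semidefinite, expanding `0 ≤ tr((U₁ - U₀)ᵀ Q (U₁ - U₀))` gives
`tr(U₁ᵀ Q U₁) ≥ 2 tr(U₁ᵀ Q U₀) - tr(U₀ᵀ Q U₀)`, and testing the maximality of `U₁` against the
competitor `U₀` gives `tr(U₁ᵀ Q U₀) ≥ tr(U₀ᵀ Q U₀)`. -/

open Matrix

theorem Matrix.PosSemidef.two_mul_trace_transpose_mul_mul_le {m n : Type*} [Fintype m]
    [Fintype n] {Q : Matrix m m ℝ} (hQ : Q.PosSemidef) (A B : Matrix m n ℝ) :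
    2 * trace (Aᵀ * Q * B) ≤ trace (Aᵀ * Q * A) + trace (Bᵀ * Q * B) := by
  have hnonneg : 0 ≤ trace ((A - B)ᵀ * Q * (A - B)) :=
    (hQ.conjTranspose_mul_mul_same (A - B)).trace_nonneg
  have hQt : Qᵀ = Q := by simpa using hQ.isHermitian.eq
  have hsymm : trace (Bᵀ * Q * A) = trace (Aᵀ * Q * B) := by
    rw [← trace_transpose, transpose_mul, transpose_mul, transpose_transpose, hQt,
      Matrix.mul_assoc]
  simp only [transpose_sub, Matrix.sub_mul, Matrix.mul_sub, trace_sub, hsymm] at hnonneg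
  linarith

theorem Matrix.posSemidef_neg_of_dotProduct_mulVec_nonpos {n : Type*} [Fintype n]
    {P : Matrix n n ℝ} (hPsym : Pᵀ = P) (hPneg : ∀ v : n → ℝ, v ⬝ᵥ (P *ᵥ v) ≤ 0) :
    (-P).PosSemidef :=
  .of_dotProduct_mulVec_nonneg (by simp [IsHermitian, hPsym]) fun v => by
    simpa [neg_mulVec] using hPneg v

theorem stmt17_general (d k : ℕ)
    (P : Matrix (Fin d) (Fin d) ℝ) (hPsym : Pᵀ = P)
    (hPneg : ∀ v : Fin d → ℝ, v ⬝ᵥ (P *ᵥ v) ≤ 0)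
    (U₀ U₁ : Matrix (Fin d) (Fin k) ℝ)
    (hU₀ : U₀ᵀ * U₀ = 1)
    (hmax : ∀ U : Matrix (Fin d) (Fin k) ℝ, Uᵀ * U = 1 →
        Matrix.trace (Uᵀ * (-P) * U₀) ≤ Matrix.trace (U₁ᵀ * (-P) * U₀)) :
    Matrix.trace (U₁ᵀ * P * U₁) ≤ Matrix.trace (U₀ᵀ * P * U₀) := by
  have hQ : (-P).PosSemidef := posSemidef_neg_of_dotProduct_mulVec_nonpos hPsym hPneg
  have hstep := hmax U₀ hU₀
  have hpolar := hQ.two_mul_trace_transpose_mul_mul_le U₁ U₀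
  simp only [Matrix.mul_neg, Matrix.neg_mul, trace_neg] at hstep hpolar
  linarith

/-- descent property of one MM step: if `P` is symmetric
negative semidefinite and `U₁ ∈ St(d,k)` maximizes `U ↦ tr(Uᵀ (−P) U₀)` over
`St(d,k)`, then `tr(U₁ᵀ P U₁) ≤ tr(U₀ᵀ P U₀)`. -/
theorem stmt17 (d k : ℕ)
    (P : Matrix (Fin d) (Fin d) ℝ) (hPsym : Pᵀ = P)
    (hPneg : ∀ v : Fin d → ℝ, v ⬝ᵥ (P *ᵥ v) ≤ 0)
    (U₀ U₁ : Matrix (Fin d) (Fin k) ℝ)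
    (hU₀ : U₀ᵀ * U₀ = 1) (hU₁ : U₁ᵀ * U₁ = 1)
    (hmax : ∀ U : Matrix (Fin d) (Fin k) ℝ, Uᵀ * U = 1 →
        Matrix.trace (Uᵀ * (-P) * U₀) ≤ Matrix.trace (U₁ᵀ * (-P) * U₀)) :
    Matrix.trace (U₁ᵀ * P * U₁) ≤ Matrix.trace (U₀ᵀ * P * U₀) :=
  stmt17_general d k P hPsym hPneg U₀ U₁ hU₀ hmax
end
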